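/- Let Ω ⊆ ℂ be open and connected, F holomorphic on Ω with F ≢ 0, and a ∈ Ω an equilibrium of order m ≥ 2. Let K ⊆ Ω be compact and γ : [0,∞) → Ω a solution of ẋ = F(x) with γ(t) ∈ K for all t ≥ 0. If a belongs to the positive limit set of γ, i.e. there exists a sequence t_k → ∞ with γ(t_k) → a, then γ(t) → a as t → ∞; that is, an orbit cannot come arbitrarily close to an equilibrium of order at least 2 infinitely often without tending to it. -/

import Mathlib

open Set Filter Topology

/-- A solution of `ẋ = F(x)` on the set `s ⊆ ℝ`, staying in `Ω`. -/
def IsSolOn (F : ℂ → ℂ) (Ω : Set ℂ) (s : Set ℝ) (γ : ℝ → ℂ) : Prop :=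
  ∀ t ∈ s, γ t ∈ Ω ∧ HasDerivWithinAt γ (F (γ t)) s t

/-!
If the orbit ever reaches `a`, it stays there by uniqueness of solutions, `F` being Lipschitz on
the compact set `K`. Otherwise write `F z = (z - a) ^ (n + 1) * g z` with `n = m - 1 ≥ 1` and
`g a ≠ 0`. In the coordinate `G z = -(n * g a * (z - a) ^ n)⁻¹` the orbit, while it stays in a
small ball around `a`, moves with velocity `g (γ t) / g a`, within `1 / 2` of `1`: the real part
of `G ∘ γ` grows at least as fast as its imaginary part can change. Hence along any excursion of
the orbit in the ball `B(a, r)` that starts on its boundary (or at time `0`) and ends on it,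
`‖G ∘ γ‖` is at most `4` times the larger of its values at the two ends. Since `‖G z‖ → ∞` as
`z → a`, once the orbit comes close enough to `a` it never leaves `B(a, r)` again.
-/

open Metric

theorem IsSolOn.continuousOn {F : ℂ → ℂ} {Ω : Set ℂ} {s : Set ℝ} {γ : ℝ → ℂ}
    (hγ : IsSolOn F Ω s γ) : ContinuousOn γ s :=
  fun t ht => (hγ t ht).2.continuousWithinAt

theorem DifferentiableOn.exists_lipschitzOnWith_of_isCompact {E : Type*}
    [NormedAddCommGroup E] [NormedSpace ℂ E] [CompleteSpace E] {f : ℂ → E} {Ω K : Set ℂ}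
    (hf : DifferentiableOn ℂ f Ω) (hΩ : IsOpen Ω) (hK : IsCompact K) (hKΩ : K ⊆ Ω) :
    ∃ L, LipschitzOnWith L f K := by
  refine LocallyLipschitzOn.exists_lipschitzOnWith_of_compact hK fun x hx => ?_
  have hfx : ContDiffAt ℂ 1 f x := (hf.contDiffOn hΩ).contDiffAt (hΩ.mem_nhds (hKΩ hx))
  obtain ⟨L, t, ht, hL⟩ := hfx.exists_lipschitzOnWith
  exact ⟨L, t, nhdsWithin_le_nhds ht, hL⟩

theorem IsSolOn.apply_eq_of_apply_eq_of_lipschitzOnWith {F : ℂ → ℂ} {Ω K : Set ℂ}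
    {γ : ℝ → ℂ} {a : ℂ} {L : NNReal} {t₀ t : ℝ} (hγ : IsSolOn F Ω (Ici 0) γ)
    (hL : LipschitzOnWith L F K) (hγK : ∀ t ∈ Ici (0 : ℝ), γ t ∈ K) (haK : a ∈ K)
    (hFa : F a = 0) (ht₀ : 0 ≤ t₀) (hγt₀ : γ t₀ = a) (ht : t₀ ≤ t) : γ t = a := by
  have hsub : Icc t₀ t ⊆ Ici 0 := fun s hs => ht₀.trans hs.1
  refine ODE_solution_unique_of_mem_Icc_right (v := fun _ => F) (s := fun _ => K)
    (fun _ _ => hL) (hγ.continuousOn.mono hsub)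
    (fun s hs => (hγ s (hsub (Ico_subset_Icc_self hs))).2.mono
      (Ici_subset_Ici.2 (ht₀.trans hs.1)))
    (fun s hs => hγK s (hsub (Ico_subset_Icc_self hs))) continuousOn_const
    (fun s _ => by simpa [hFa] using hasDerivWithinAt_const s (Ici s) a)
    (fun _ _ => haK) hγt₀ ⟨ht, le_rfl⟩

theorem exists_first_eq_of_lt_of_le {f : ℝ → ℝ} {a b r : ℝ} (hab : a ≤ b)
    (hf : ContinuousOn f (Icc a b)) (ha : f a < r) (hb : r ≤ f b) :
    ∃ c ∈ Ioc a b, f c = r ∧ ∀ t ∈ Icc a c, f t ≤ r := by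
  set S := {t ∈ Icc a b | r ≤ f t}
  have hS : IsClosed S := hf.preimage_isClosed_of_isClosed isClosed_Icc isClosed_Ici
  have hc : sInf S ∈ S := hS.csInf_mem ⟨b, right_mem_Icc.2 hab, hb⟩ ⟨a, fun t ht => ht.1.1⟩
  have hbefore : ∀ t ∈ Ico a (sInf S), f t < r := fun t ht => not_le.1 fun h =>
    (csInf_le ⟨a, fun s hs => hs.1.1⟩
      (show t ∈ S from ⟨⟨ht.1, ht.2.le.trans hc.1.2⟩, h⟩)).not_gt ht.2
  have hac : a < sInf S := hc.1.1.lt_of_ne fun h => (h ▸ ha).not_ge hc.2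
  obtain ⟨s, hs, hfs⟩ := intermediate_value_Icc hac.le (hf.mono (Icc_subset_Icc_right hc.1.2))
    ⟨ha.le, hc.2⟩
  have hsc : s = sInf S := hs.2.eq_of_not_lt fun h => (hbefore s ⟨hs.1, h⟩).ne hfs
  refine ⟨sInf S, ⟨hac, hc.1.2⟩, hsc ▸ hfs, fun t ht => ?_⟩
  rcases ht.2.lt_or_eq with h | rfl
  · exact (hbefore t ⟨ht.1, h⟩).le
  · exact hsc ▸ hfs.le

theorem exists_last_eq_or_eq_of_lt {f : ℝ → ℝ} {a b r : ℝ} (hab : a ≤ b)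
    (hf : ContinuousOn f (Icc a b)) (hb : f b < r) :
    ∃ c ∈ Icc a b, (c = a ∨ f c = r) ∧ ∀ t ∈ Icc c b, f t ≤ r := by
  set S := {t ∈ Icc a b | r ≤ f t}
  rcases S.eq_empty_or_nonempty with hS | hS
  · refine ⟨a, left_mem_Icc.2 hab, Or.inl rfl, fun t ht => le_of_lt (not_le.1 fun h => ?_)⟩
    exact hS.subset ⟨ht, h⟩
  have hc : sSup S ∈ S := (hf.preimage_isClosed_of_isClosed isClosed_Icc isClosed_Ici).csSup_mem
    hS ⟨b, fun t ht => ht.1.2⟩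
  have hafter : ∀ t ∈ Ioc (sSup S) b, f t < r := fun t ht => not_le.1 fun h =>
    (le_csSup ⟨b, fun s hs => hs.1.2⟩
      (show t ∈ S from ⟨⟨hc.1.1.trans ht.1.le, ht.2⟩, h⟩)).not_gt ht.1
  have hcb : sSup S < b := hc.1.2.lt_of_ne fun h => (h ▸ hb).not_ge hc.2
  obtain ⟨s, hs, hfs⟩ := intermediate_value_Icc' hcb.le (hf.mono (Icc_subset_Icc_left hc.1.1))
    ⟨hb.le, hc.2⟩
  have hsc : s = sSup S := (hs.1.eq_of_not_lt fun h => (hafter s ⟨h, hs.2⟩).ne hfs).symm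
  refine ⟨sSup S, hc.1, Or.inr (hsc ▸ hfs), fun t ht => ?_⟩
  rcases ht.1.lt_or_eq with h | rfl
  · exact (hafter t ⟨h, ht.2⟩).le
  · exact hsc ▸ hfs.le

theorem norm_sub_sub_le_of_norm_deriv_sub_one_le {φ w : ℝ → ℂ} {α β δ : ℝ} (hαβ : α ≤ β)
    (hφ : ∀ t ∈ Icc α β, HasDerivWithinAt φ (w t) (Icc α β) t)
    (hw : ∀ t ∈ Icc α β, ‖w t - 1‖ ≤ δ) :
    ‖φ β - φ α - ((β - α : ℝ) : ℂ)‖ ≤ δ * (β - α) := by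
  have hid : ∀ t ∈ Icc α β, HasDerivWithinAt (fun s : ℝ => φ s - s) (w t - 1) (Icc α β) t :=
    fun t ht => (hφ t ht).sub (hasDerivAt_id t).ofReal_comp.hasDerivWithinAt
  have := (convex_Icc α β).norm_image_sub_le_of_norm_hasDerivWithin_le hid hw
    (left_mem_Icc.2 hαβ) (right_mem_Icc.2 hαβ)
  rwa [Real.norm_of_nonneg (sub_nonneg.2 hαβ), sub_sub_sub_comm, ← Complex.ofReal_sub] at this

theorem Complex.norm_le_of_norm_sub_sub_ofReal_le {z₀ z z₁ : ℂ} {s s' C : ℝ}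
    (h₀ : ‖z - z₀ - s‖ ≤ s / 2) (h₁ : ‖z₁ - z - s'‖ ≤ s' / 2) (hz₀ : ‖z₀‖ ≤ C)
    (hz₁ : ‖z₁‖ ≤ C) : ‖z‖ ≤ 4 * C := by
  have re₀ := abs_le.1 ((abs_re_le_norm _).trans h₀)
  have im₀ := abs_le.1 ((abs_im_le_norm _).trans h₀)
  have re₁ := abs_le.1 ((abs_re_le_norm _).trans h₁)
  have bre₀ := abs_le.1 ((abs_re_le_norm z₀).trans hz₀)
  have bim₀ := abs_le.1 ((abs_im_le_norm z₀).trans hz₀)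
  have bre₁ := abs_le.1 ((abs_re_le_norm z₁).trans hz₁)
  simp only [sub_re, sub_im, ofReal_re, ofReal_im] at re₀ im₀ re₁
  have hre : |z.re| ≤ C := abs_le.2 ⟨by linarith, by linarith⟩
  have him : |z.im| ≤ 3 * C := abs_le.2 ⟨by linarith, by linarith⟩
  linarith [norm_le_abs_re_add_abs_im z]

theorem lt_of_drift {d : ℝ → ℝ} {φ : ℝ → ℂ} {r C t₀ : ℝ} (hd : ContinuousOn d (Ici 0))
    (hφ : ∀ α β, 0 ≤ α → α ≤ β → (∀ t ∈ Icc α β, d t ≤ r) →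
      ‖φ β - φ α - ((β - α : ℝ) : ℂ)‖ ≤ (β - α) / 2)
    (hC : ∀ t, 0 ≤ t → d t = r → ‖φ t‖ ≤ C) (hC₀ : ‖φ 0‖ ≤ C)
    (ht₀ : 0 ≤ t₀) (hdt₀ : d t₀ < r) (hφt₀ : 4 * C < ‖φ t₀‖) {t : ℝ} (ht : t₀ ≤ t) : d t < r := by
  by_contra! hdt
  obtain ⟨β, hβ, hdβ, hβr⟩ := exists_first_eq_of_lt_of_le ht
    (hd.mono fun s hs => ht₀.trans hs.1) hdt₀ hdt
  obtain ⟨α, hα, hdα, hαr⟩ := exists_last_eq_or_eq_of_lt ht₀ (hd.mono fun s hs => hs.1) hdt₀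
  have hφα : ‖φ α‖ ≤ C := by
    rcases hdα with rfl | hdα
    exacts [hC₀, hC α hα.1 hdα]
  have := Complex.norm_le_of_norm_sub_sub_ofReal_le (hφ α t₀ hα.1 hα.2 hαr)
    (hφ t₀ β ht₀ hβ.1.le hβr) hφα (hC β (ht₀.trans hβ.1.le) hdβ)
  linarith

/-- The leading term of the Fatou coordinate of `ż = c (z - a) ^ (n + 1)` at `a`. -/
noncomputable def fatouCoord (a c : ℂ) (n : ℕ) (z : ℂ) : ℂ := -(n * c * (z - a) ^ n)⁻¹

theorem hasDerivAt_fatouCoord {a c z : ℂ} {n : ℕ} (hn : n ≠ 0) (hc : c ≠ 0) (hz : z ≠ a) :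
    HasDerivAt (fatouCoord a c n) (c * (z - a) ^ (n + 1))⁻¹ z := by
  obtain ⟨k, rfl⟩ := Nat.exists_eq_add_one_of_ne_zero hn
  have hza : z - a ≠ 0 := sub_ne_zero.mpr hz
  have hk : ((k + 1 : ℕ) : ℂ) ≠ 0 := Nat.cast_ne_zero.2 k.succ_ne_zero
  have hpow : HasDerivAt (fun w => ((k + 1 : ℕ) : ℂ) * c * (w - a) ^ (k + 1))
      ((k + 1 : ℕ) * c * ((k + 1 : ℕ) * (z - a) ^ k)) z := by
    simpa using (((hasDerivAt_id z).sub_const a).pow (k + 1)).const_mul (((k + 1 : ℕ) : ℂ) * c)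
  refine ((hpow.inv (mul_ne_zero (mul_ne_zero hk hc) (pow_ne_zero _ hza))).neg).congr_deriv ?_
  field_simp
  ring

theorem norm_fatouCoord_le {a c z : ℂ} {n : ℕ} {r : ℝ} (hr : 0 < r) (hn : n ≠ 0) (hc : c ≠ 0)
    (hz : r ≤ dist z a) : ‖fatouCoord a c n z‖ ≤ (n * ‖c‖ * r ^ n)⁻¹ := by
  rw [fatouCoord, norm_neg, norm_inv, norm_mul, norm_mul, norm_pow, ← dist_eq_norm,
    Complex.norm_natCast]
  have : (0 : ℝ) < n := Nat.cast_pos.2 (Nat.pos_of_ne_zero hn)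
  gcongr

theorem tendsto_norm_fatouCoord {a c : ℂ} {n : ℕ} (hn : n ≠ 0) (hc : c ≠ 0) :
    Tendsto (fun z => ‖fatouCoord a c n z‖) (𝓝[≠] a) atTop := by
  have h : Tendsto (fun z => (n : ℂ) * c * (z - a) ^ n) (𝓝[≠] a) (𝓝[≠] 0) := by
    refine tendsto_nhdsWithin_of_tendsto_nhds_of_eventually_within _ ?_ ?_
    · refine Tendsto.mono_left ?_ nhdsWithin_le_nhds
      have : Continuous fun z : ℂ => (n : ℂ) * c * (z - a) ^ n := by fun_prop
      simpa [hn] using this.tendsto a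
    · filter_upwards [self_mem_nhdsWithin] with z hz
      simpa [hn, hc, sub_eq_zero] using hz
  exact (tendsto_norm_inv_nhdsNE_zero_atTop.comp h).congr fun z => by simp [fatouCoord]

theorem IsSolOn.norm_fatouCoord_sub_sub_le {F g : ℂ → ℂ} {Ω : Set ℂ} {γ : ℝ → ℂ} {a : ℂ}
    {n : ℕ} {R α β : ℝ} (hγ : IsSolOn F Ω (Ici 0) γ) (hn : n ≠ 0) (hga : g a ≠ 0)
    (hF : ∀ z ∈ closedBall a R, F z = (z - a) ^ (n + 1) * g z)
    (hg : ∀ z ∈ closedBall a R, ‖g z / g a - 1‖ ≤ 1 / 2) (hγa : ∀ t ∈ Ici (0 : ℝ), γ t ≠ a)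
    (hα : 0 ≤ α) (hαβ : α ≤ β) (hR : ∀ t ∈ Icc α β, γ t ∈ closedBall a R) :
    ‖fatouCoord a (g a) n (γ β) - fatouCoord a (g a) n (γ α) - ((β - α : ℝ) : ℂ)‖ ≤
      (β - α) / 2 := by
  have hsub : Icc α β ⊆ Ici 0 := fun t ht => hα.trans ht.1
  refine (norm_sub_sub_le_of_norm_deriv_sub_one_le (φ := fatouCoord a (g a) n ∘ γ) hαβ
    (fun t ht => ?_) (fun t ht => hg _ (hR t ht))).trans_eq (one_div_mul_eq_div _ _)
  have := (hasDerivAt_fatouCoord hn hga (hγa t (hsub ht))).comp_hasDerivWithinAt t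
    ((hγ t (hsub ht)).2.mono hsub)
  rw [hF _ (hR t ht)] at this
  refine this.congr_deriv ?_
  have := sub_ne_zero.2 (hγa t (hsub ht))
  field_simp

theorem IsSolOn.tendsto_of_mem_closure_image {F g : ℂ → ℂ} {Ω : Set ℂ} {γ : ℝ → ℂ} {a : ℂ}
    {n : ℕ} (hγ : IsSolOn F Ω (Ici 0) γ) (hn : n ≠ 0) (hg : ContinuousAt g a) (hga : g a ≠ 0)
    (hFg : ∀ᶠ z in 𝓝 a, F z = (z - a) ^ (n + 1) * g z) (hγa : ∀ t ∈ Ici (0 : ℝ), γ t ≠ a)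
    (ha : a ∈ closure (γ '' Ici 0)) : Tendsto γ atTop (𝓝 a) := by
  set G := fatouCoord a (g a) n
  obtain ⟨R, hR, hRF, hRg⟩ : ∃ R > 0, (∀ z ∈ closedBall a R, F z = (z - a) ^ (n + 1) * g z) ∧
      ∀ z ∈ closedBall a R, ‖g z / g a - 1‖ ≤ 1 / 2 := by
    have hg' : Tendsto (fun z => ‖g z / g a - 1‖) (𝓝 a) (𝓝 0) := by
      simpa [hga] using ((hg.div_const (g a)).sub_const 1).norm
    obtain ⟨R, hR, hball⟩ := nhds_basis_closedBall.eventually_iff.1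
      (hFg.and (hg'.eventually (ge_mem_nhds (by norm_num : (0 : ℝ) < 1 / 2))))
    exact ⟨R, hR, fun z hz => (hball hz).1, fun z hz => (hball hz).2⟩
  rw [Metric.tendsto_atTop]
  intro ε hε
  set r := min ε R
  set C := max (n * ‖g a‖ * r ^ n)⁻¹ ‖G (γ 0)‖
  obtain ⟨t₀, ht₀, hdt₀, hGt₀⟩ : ∃ t₀ ∈ Ici (0 : ℝ), dist (γ t₀) a < r ∧ 4 * C < ‖G (γ t₀)‖ := by
    have hev : ∀ᶠ z in 𝓝[≠] a, dist z a < r ∧ 4 * C < ‖G z‖ :=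
      (eventually_nhdsWithin_of_eventually_nhds (ball_mem_nhds a (lt_min hε hR))).and
        ((tendsto_norm_fatouCoord hn hga).eventually_gt_atTop _)
    have hsub : γ '' Ici 0 ⊆ {a}ᶜ := by
      rintro _ ⟨t, ht, rfl⟩
      exact hγa t ht
    have := mem_closure_iff_nhdsWithin_neBot.1 ha
    obtain ⟨_, h, ⟨t₀, ht₀, rfl⟩⟩ :=
      ((hev.filter_mono (nhdsWithin_mono a hsub)).and self_mem_nhdsWithin).exists
    exact ⟨t₀, ht₀, h⟩
  have hd : ContinuousOn (fun t => dist (γ t) a) (Ici 0) :=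
    (continuous_id.dist continuous_const).comp_continuousOn hγ.continuousOn
  refine ⟨t₀, fun t ht => (lt_of_drift (φ := G ∘ γ) hd (fun α β hα hαβ hin => ?_)
    (fun t _ hdt => ?_) (le_max_right _ _) ht₀ hdt₀ hGt₀ ht).trans_le (min_le_left _ _)⟩
  · exact hγ.norm_fatouCoord_sub_sub_le hn hga hRF hRg hγa hα hαβ
      fun t ht => (hin t ht).trans (min_le_right _ _)
  · exact (norm_fatouCoord_le (lt_min hε hR) hn hga hdt.ge).trans (le_max_left _ _)

theorem stmt_18_general (Ω : Set ℂ) (hΩ : IsOpen Ω)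
    (F : ℂ → ℂ) (hF : DifferentiableOn ℂ F Ω)
    (a : ℂ) (ha : a ∈ Ω) (m : ℕ) (hm : 2 ≤ m)
    (hlow : ∀ k < m, iteratedDeriv k F a = 0) (hord : iteratedDeriv m F a ≠ 0)
    (K : Set ℂ) (hK : IsCompact K) (hKΩ : K ⊆ Ω)
    (γ : ℝ → ℂ) (hγ : IsSolOn F Ω (Ici 0) γ) (hγK : ∀ t ∈ Ici (0 : ℝ), γ t ∈ K)
    (hlimpt : ∃ u : ℕ → ℝ, (∀ k, u k ∈ Ici (0 : ℝ)) ∧ Tendsto u atTop atTop ∧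
      Tendsto (fun k => γ (u k)) atTop (nhds a)) :
    Tendsto γ atTop (nhds a) := by
  obtain ⟨u, hu, -, hγu⟩ := hlimpt
  by_cases hhit : ∃ t₀ ∈ Ici (0 : ℝ), γ t₀ = a
  · obtain ⟨t₀, ht₀, hγt₀⟩ := hhit
    obtain ⟨L, hL⟩ := hF.exists_lipschitzOnWith_of_isCompact hΩ hK hKΩ
    have haK : a ∈ K := hK.isClosed.mem_of_tendsto hγu (.of_forall fun k => hγK _ (hu k))
    have hFa : F a = 0 := by simpa using hlow 0 (by omega)
    exact tendsto_const_nhds.congr' <| (eventually_ge_atTop t₀).mono fun t ht =>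
      (hγ.apply_eq_of_apply_eq_of_lipschitzOnWith hL hγK haK hFa ht₀ hγt₀ ht).symm
  · push Not at hhit
    have han : AnalyticAt ℂ F a := hF.analyticAt (hΩ.mem_nhds ha)
    obtain ⟨g, hg, hga, hFg⟩ := (han.analyticOrderAt_eq_natCast (n := m - 1 + 1)).1 <| by
      rw [Nat.sub_add_cancel (by omega)]
      exact (analyticOrderAt_eq_nat_iff_iteratedDeriv_eq_zero han).2 ⟨hlow, hord⟩
    exact hγ.tendsto_of_mem_closure_image (by omega) hg.continuousAt hga hFg hhit
      (mem_closure_of_tendsto hγu (.of_forall fun k => mem_image_of_mem γ (hu k)))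

/-- if an equilibrium `a` of order `m ≥ 2` of a holomorphic flow lies in the
positive limit set of a forward solution `γ` staying in a compact `K ⊆ Ω`, then `γ` tends
to `a`. -/
theorem stmt_18 (Ω : Set ℂ) (hΩ : IsOpen Ω) (hconn : IsConnected Ω)
    (F : ℂ → ℂ) (hF : DifferentiableOn ℂ F Ω) (hF0 : ∃ z ∈ Ω, F z ≠ 0)
    (a : ℂ) (ha : a ∈ Ω) (m : ℕ) (hm : 2 ≤ m)
    (hlow : ∀ k < m, iteratedDeriv k F a = 0) (hord : iteratedDeriv m F a ≠ 0)
    (K : Set ℂ) (hK : IsCompact K) (hKΩ : K ⊆ Ω)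
    (γ : ℝ → ℂ) (hγ : IsSolOn F Ω (Ici 0) γ) (hγK : ∀ t ∈ Ici (0 : ℝ), γ t ∈ K)
    (hlimpt : ∃ u : ℕ → ℝ, (∀ k, u k ∈ Ici (0 : ℝ)) ∧ Tendsto u atTop atTop ∧
      Tendsto (fun k => γ (u k)) atTop (nhds a)) :
    Tendsto γ atTop (nhds a) :=
  stmt_18_general Ω hΩ F hF a ha m hm hlow hord K hK hKΩ γ hγ hγK hlimpt
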